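/- arXiv:1901.07114 — 2 statements merged into one kernel-verified Lean document; each statement's English description precedes it below -/
import Mathlib

section
/- Let ℓ : ℝ → ℝ be α-strongly convex and differentiable, K ∈ ℝ^{n×n} symmetric with smallest eigenvalue λ_min(K) ≥ λ > 0, and let Δ ∈ ℝ^n with Δ_i = ℓ'(f_i). Then Δᵀ K Δ ≥ λ ‖Δ‖² ≥ 2αλ · ∑_i (ℓ(f_i) - min ℓ). -/
open Finset Matrix

section StronglyConvex

variable {E : Type*} [NormedAddCommGroup E] [InnerProductSpace ℝ E]
  {ℓ : E → ℝ} {α : ℝ} {x g : E}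

/-- Completing the square: `⟪g, v⟫ + α/2 ‖v‖² ≥ -‖g‖²/(2α)`, with equality at `v = -g/α`. -/
theorem sub_norm_sq_div_mem_lowerBounds_range (hα : 0 < α)
    (hsc : ∀ y, ℓ x + inner ℝ g (y - x) + α / 2 * ‖y - x‖ ^ 2 ≤ ℓ y) :
    ℓ x - ‖g‖ ^ 2 / (2 * α) ∈ lowerBounds (Set.range ℓ) := by
  rintro _ ⟨y, rfl⟩
  have hsq : 0 ≤ ‖α • (y - x) + g‖ ^ 2 := sq_nonneg _
  rw [norm_add_sq_real, norm_smul, real_inner_smul_left, real_inner_comm, Real.norm_eq_abs,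
    abs_of_pos hα] at hsq
  have hdiv : ‖g‖ ^ 2 / (2 * α) * (2 * α) = ‖g‖ ^ 2 := div_mul_cancel₀ _ (by positivity)
  nlinarith [hsc y]

/-- The Polyak–Łojasiewicz inequality for an `α`-strongly convex function with gradient `g`
at `x`. -/
theorem two_mul_sub_le_norm_sq_of_isGLB (hα : 0 < α)
    (hsc : ∀ y, ℓ x + inner ℝ g (y - x) + α / 2 * ‖y - x‖ ^ 2 ≤ ℓ y)
    {m : ℝ} (hm : IsGLB (Set.range ℓ) m) :
    2 * α * (ℓ x - m) ≤ ‖g‖ ^ 2 := by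
  have hle : ℓ x - ‖g‖ ^ 2 / (2 * α) ≤ m := hm.2 (sub_norm_sq_div_mem_lowerBounds_range hα hsc)
  have hdiv : ‖g‖ ^ 2 / (2 * α) * (2 * α) = ‖g‖ ^ 2 := div_mul_cancel₀ _ (by positivity)
  nlinarith

end StronglyConvex

theorem two_mul_sub_le_sq_of_isGLB {ℓ : ℝ → ℝ} {α x d : ℝ} (hα : 0 < α)
    (hsc : ∀ y, ℓ x + d * (y - x) + α / 2 * (y - x) ^ 2 ≤ ℓ y)
    {m : ℝ} (hm : IsGLB (Set.range ℓ) m) :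
    2 * α * (ℓ x - m) ≤ d ^ 2 := by
  simpa only [Real.norm_eq_abs, sq_abs] using
    two_mul_sub_le_norm_sq_of_isGLB (g := d) hα
      (fun y => by simpa only [Real.inner_apply, Real.norm_eq_abs, sq_abs] using hsc y) hm

theorem stmt_11_general (n : ℕ) (ℓ : ℝ → ℝ) (α : ℝ) (hα : 0 < α)
    (hsc : ∀ x y : ℝ, ℓ x + deriv ℓ x * (y - x) + α / 2 * (y - x) ^ 2 ≤ ℓ y)
    (K : Matrix (Fin n) (Fin n) ℝ)
    (lam : ℝ) (hlam : 0 < lam)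
    (hmin : ∀ x : Fin n → ℝ, lam * ∑ i, x i ^ 2 ≤ x ⬝ᵥ K.mulVec x)
    (f : Fin n → ℝ) (Δ : Fin n → ℝ) (hΔ : ∀ i, Δ i = deriv ℓ (f i))
    (m : ℝ) (hm : IsGLB (Set.range ℓ) m) :
    lam * ∑ i, Δ i ^ 2 ≤ Δ ⬝ᵥ K.mulVec Δ ∧
    2 * α * lam * ∑ i, (ℓ (f i) - m) ≤ lam * ∑ i, Δ i ^ 2 := by
  refine ⟨hmin Δ, ?_⟩
  have hPL (i : Fin n) : 2 * α * (ℓ (f i) - m) ≤ Δ i ^ 2 :=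
    hΔ i ▸ two_mul_sub_le_sq_of_isGLB hα (hsc (f i)) hm
  calc 2 * α * lam * ∑ i, (ℓ (f i) - m)
      = lam * ∑ i, 2 * α * (ℓ (f i) - m) := by rw [← mul_sum]; ring
    _ ≤ lam * ∑ i, Δ i ^ 2 := by gcongr with i _; exact hPL i

theorem stmt_11 (n : ℕ) (ℓ : ℝ → ℝ) (α : ℝ) (hα : 0 < α) (hdiff : Differentiable ℝ ℓ)
    (hsc : ∀ x y : ℝ, ℓ x + deriv ℓ x * (y - x) + α / 2 * (y - x) ^ 2 ≤ ℓ y)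
    (K : Matrix (Fin n) (Fin n) ℝ) (hKsym : K.IsSymm)
    (lam : ℝ) (hlam : 0 < lam)
    (hmin : ∀ x : Fin n → ℝ, lam * ∑ i, x i ^ 2 ≤ x ⬝ᵥ K.mulVec x)
    (f : Fin n → ℝ) (Δ : Fin n → ℝ) (hΔ : ∀ i, Δ i = deriv ℓ (f i))
    (m : ℝ) (hm : IsGLB (Set.range ℓ) m) :
    lam * ∑ i, Δ i ^ 2 ≤ Δ ⬝ᵥ K.mulVec Δ ∧
    2 * α * lam * ∑ i, (ℓ (f i) - m) ≤ lam * ∑ i, Δ i ^ 2 :=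
  stmt_11_general n ℓ α hα hsc K lam hlam hmin f Δ hΔ m hm
end

section
/- Let Θ ∼ N(0, I_d) be a standard Gaussian in ℝ^d (d ≥ 2), and let x, x̃ ∈ ℝ^d be unit vectors with t = ⟨x, x̃⟩ and θ = arccos(t). Then E[σ(⟨x,Θ⟩)·σ(⟨x̃,Θ⟩)] = ((π-θ)/(2π))·cos θ + (sin θ)/(2π), where σ(z) = max(z,0). -/
/-!
Write `x' = cos θ • x + sin θ • y` with `y` a unit vector orthogonal to `x`. By rotation
invariance of the standard Gaussian, `(⟪x, Θ⟫, ⟪y, Θ⟫)` is a standard Gaussian vector in `ℝ²`, so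
the expectation is the planar Gaussian integral of `max p₁ 0 * max (cos θ p₁ + sin θ p₂) 0`, a
function homogeneous of degree two. In polar coordinates the radial factor is
`(2π)⁻¹ ∫₀^∞ r³ e^{-r²/2} dr = π⁻¹`, and the angular integrand `max (cos α) 0 * max (cos (α - θ)) 0`
is supported on `(θ - π/2, π/2)`, where it equals `(cos (2α - θ) + cos θ) / 2`.
-/

open MeasureTheory Real ProbabilityTheory Set Module InnerProductGeometry
open scoped RealInnerProductSpace

lemma integral_Ioi_pow_three_mul_exp_neg_sq_div_two :
    ∫ r in Ioi (0 : ℝ), r ^ 3 * exp (-r ^ 2 / 2) = 2 := by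
  have h := integral_rpow_mul_exp_neg_mul_rpow (p := 2) (q := 3) (b := 1 / 2)
    (by norm_num) (by norm_num) (by norm_num)
  norm_num at h
  simpa [neg_div, div_eq_inv_mul] using h

lemma gaussianPDFReal_mul_gaussianPDFReal (a b : ℝ) :
    gaussianPDFReal 0 1 a * gaussianPDFReal 0 1 b = (2 * π)⁻¹ * exp (-(a ^ 2 + b ^ 2) / 2) := by
  simp only [gaussianPDFReal, NNReal.coe_one, mul_one, sub_zero]
  rw [mul_mul_mul_comm, ← mul_inv, mul_self_sqrt (by positivity), ← exp_add]
  ring_nf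

lemma gaussianReal_prod_gaussianReal_eq_withDensity :
    (gaussianReal 0 1).prod (gaussianReal 0 1)
      = volume.withDensity (fun p : ℝ × ℝ => gaussianPDF 0 1 p.1 * gaussianPDF 0 1 p.2) := by
  rw [gaussianReal_of_var_ne_zero _ one_ne_zero, prod_withDensity (measurable_gaussianPDF 0 1)
    (measurable_gaussianPDF 0 1), Measure.volume_eq_prod]

lemma integral_gaussianReal_prod_of_homogeneous {f : ℝ × ℝ → ℝ} {g : ℝ → ℝ}
    (hfg : ∀ r > 0, ∀ a, f (r * cos a, r * sin a) = r ^ 2 * g a) :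
    ∫ p, f p ∂(gaussianReal 0 1).prod (gaussianReal 0 1) = π⁻¹ * ∫ a in Ioo (-π) π, g a := by
  rw [gaussianReal_prod_gaussianReal_eq_withDensity, integral_withDensity_eq_integral_toReal_smul
    (by fun_prop) (ae_of_all _ fun _ => ENNReal.mul_lt_top gaussianPDF_lt_top gaussianPDF_lt_top),
    ← integral_comp_polarCoord_symm]
  have hpolar : ∀ p ∈ polarCoord.target, p.1 • ((gaussianPDF 0 1 (polarCoord.symm p).1 *
        gaussianPDF 0 1 (polarCoord.symm p).2).toReal • f (polarCoord.symm p))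
      = p.1 ^ 3 * exp (-p.1 ^ 2 / 2) * ((2 * π)⁻¹ * g p.2) := by
    rintro ⟨r, a⟩ ⟨hr, -⟩
    rw [polarCoord_symm_apply, ENNReal.toReal_mul, toReal_gaussianPDF, toReal_gaussianPDF,
      gaussianPDFReal_mul_gaussianPDFReal, hfg r hr, smul_eq_mul, smul_eq_mul,
      show (r * cos a) ^ 2 + (r * sin a) ^ 2 = r ^ 2 by nlinarith [sin_sq_add_cos_sq a]]
    ring
  rw [setIntegral_congr_fun polarCoord.open_target.measurableSet hpolar, polarCoord_target,
    Measure.volume_eq_prod, setIntegral_prod_mul (fun r => r ^ 3 * exp (-r ^ 2 / 2))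
      (fun a => (2 * π)⁻¹ * g a), integral_Ioi_pow_three_mul_exp_neg_sq_div_two,
    integral_const_mul]
  field_simp

lemma integral_cos_mul_cos_sub (θ : ℝ) :
    ∫ a in (θ - π / 2)..(π / 2), cos a * cos (a - θ) = sin θ / 2 + (π - θ) * cos θ / 2 := by
  have hprod : ∀ a, cos a * cos (a - θ) = (cos (2 * a - θ) + cos θ) / 2 := fun a => by
    rw [cos_add_cos]; ring_nf
  have hsin_right : sin (2 * (π / 2) - θ) = sin θ := by
    rw [show 2 * (π / 2) - θ = π - θ by ring, sin_pi_sub]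
  have hsin_left : sin (2 * (θ - π / 2) - θ) = -sin θ := by
    rw [show 2 * (θ - π / 2) - θ = -(π - θ) by ring, sin_neg, sin_pi_sub]
  simp only [hprod, intervalIntegral.integral_div]
  rw [intervalIntegral.integral_add (by apply Continuous.intervalIntegrable; fun_prop)
      intervalIntegrable_const,
    intervalIntegral.integral_comp_mul_sub (fun x => cos x) two_ne_zero, integral_cos,
    hsin_right, hsin_left, intervalIntegral.integral_const, smul_eq_mul, smul_eq_mul]
  ring

lemma max_cos_mul_max_cos_sub_eq_indicator {θ a : ℝ} (hθ₀ : 0 ≤ θ) (hθπ : θ ≤ π)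
    (ha : a ∈ Ioo (-π) π) :
    max (cos a) 0 * max (cos (a - θ)) 0
      = (Ioo (θ - π / 2) (π / 2)).indicator (fun a => cos a * cos (a - θ)) a := by
  obtain ⟨ha₁, ha₂⟩ := ha
  by_cases hmem : a ∈ Ioo (θ - π / 2) (π / 2)
  · have ⟨hb₁, hb₂⟩ := hmem
    rw [indicator_of_mem hmem,
      max_eq_left (cos_nonneg_of_mem_Icc ⟨by linarith, by linarith⟩),
      max_eq_left (cos_nonneg_of_mem_Icc ⟨by linarith, by linarith⟩)]
  · rw [indicator_of_notMem hmem]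
    rw [mem_Ioo, not_and_or, not_lt, not_lt] at hmem
    rcases hmem with h | h
    · by_cases hnear : θ - (π + π / 2) ≤ a
      · have hc : cos (a - θ) ≤ 0 := by
          rw [← cos_neg]; exact cos_nonpos_of_pi_div_two_le_of_le (by linarith) (by linarith)
        rw [max_eq_right hc, mul_zero]
      · have hc : cos a ≤ 0 := by
          rw [← cos_neg]; exact cos_nonpos_of_pi_div_two_le_of_le (by linarith) (by linarith)
        rw [max_eq_right hc, zero_mul]
    · rw [max_eq_right (cos_nonpos_of_pi_div_two_le_of_le h (by linarith)), zero_mul]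

lemma integral_Ioo_max_cos_mul_max_cos_sub {θ : ℝ} (hθ₀ : 0 ≤ θ) (hθπ : θ ≤ π) :
    ∫ a in Ioo (-π) π, max (cos a) 0 * max (cos (a - θ)) 0
      = sin θ / 2 + (π - θ) * cos θ / 2 := by
  have hsub : Ioo (θ - π / 2) (π / 2) ⊆ Ioo (-π) π :=
    Ioo_subset_Ioo (by linarith [pi_pos]) (by linarith [pi_pos])
  rw [setIntegral_congr_fun measurableSet_Ioo
      fun a ha => max_cos_mul_max_cos_sub_eq_indicator hθ₀ hθπ ha,
    setIntegral_indicator measurableSet_Ioo, inter_eq_self_of_subset_right hsub,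
    ← integral_Ioc_eq_integral_Ioo, ← intervalIntegral.integral_of_le (by linarith),
    integral_cos_mul_cos_sub]

lemma integral_max_mul_max_gaussianReal_prod {θ : ℝ} (hθ₀ : 0 ≤ θ) (hθπ : θ ≤ π) :
    ∫ p, max p.1 0 * max (cos θ * p.1 + sin θ * p.2) 0
        ∂(gaussianReal 0 1).prod (gaussianReal 0 1)
      = (π - θ) / (2 * π) * cos θ + sin θ / (2 * π) := by
  rw [integral_gaussianReal_prod_of_homogeneous
      (g := fun a => max (cos a) 0 * max (cos (a - θ)) 0),
    integral_Ioo_max_cos_mul_max_cos_sub hθ₀ hθπ]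
  · field_simp
    ring
  · intro r hr a
    have hrot : cos θ * (r * cos a) + sin θ * (r * sin a) = r * cos (a - θ) := by
      rw [cos_sub]; ring
    have hmax : ∀ x, max (r * x) 0 = r * max x 0 := fun x => by
      rw [mul_max_of_nonneg _ _ hr.le, mul_zero]
    dsimp only
    rw [hrot, hmax, hmax]
    ring

section EuclideanGeometry

variable {E : Type*} [NormedAddCommGroup E] [InnerProductSpace ℝ E] [FiniteDimensional ℝ E]

lemma exists_norm_eq_one_inner_eq_zero (hE : 2 ≤ finrank ℝ E) (u : E) :
    ∃ w : E, ‖w‖ = 1 ∧ ⟪u, w⟫ = 0 := by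
  have hspan : finrank ℝ (ℝ ∙ u) ≤ 1 := by simpa using finrank_span_le_card ({u} : Set E)
  have hperp : 0 < finrank ℝ (ℝ ∙ u)ᗮ := by
    have := (ℝ ∙ u).finrank_add_finrank_orthogonal
    omega
  obtain ⟨z, hz, hz0⟩ := Submodule.exists_mem_ne_zero_of_ne_bot
    (Submodule.one_le_finrank_iff.mp hperp)
  refine ⟨‖z‖⁻¹ • z, norm_smul_inv_norm hz0, ?_⟩
  rw [inner_smul_right, Submodule.mem_orthogonal_singleton_iff_inner_right.mp hz, mul_zero]

lemma exists_eq_inner_smul_add_norm_smul (hE : 2 ≤ finrank ℝ E) {u : E} (hu : ‖u‖ = 1) (v : E) :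
    ∃ w : E, ‖w‖ = 1 ∧ ⟪u, w⟫ = 0 ∧ v = ⟪u, v⟫ • u + ‖v - ⟪u, v⟫ • u‖ • w := by
  set r := v - ⟪u, v⟫ • u
  have hur : ⟪u, r⟫ = 0 := by
    simp [r, inner_sub_right, inner_smul_right, hu]
  by_cases hr : r = 0
  · obtain ⟨w, hw, huw⟩ := exists_norm_eq_one_inner_eq_zero hE u
    exact ⟨w, hw, huw, by simp [hr, ← sub_eq_zero, r]⟩
  · refine ⟨‖r‖⁻¹ • r, norm_smul_inv_norm hr, ?_, ?_⟩
    · rw [inner_smul_right, hur, mul_zero]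
    · rw [smul_inv_smul₀ (norm_ne_zero_iff.mpr hr), add_sub_cancel]

lemma exists_eq_cos_angle_smul_add_sin_angle_smul (hE : 2 ≤ finrank ℝ E) {u v : E} (hu : ‖u‖ = 1)
    (hv : ‖v‖ = 1) :
    ∃ w : E, ‖w‖ = 1 ∧ ⟪u, w⟫ = 0 ∧ v = cos (angle u v) • u + sin (angle u v) • w := by
  obtain ⟨w, hw, huw, hvw⟩ := exists_eq_inner_smul_add_norm_smul hE hu v
  have hcos : cos (angle u v) = ⟪u, v⟫ := by simp [cos_angle, hu, hv]
  have hsin : sin (angle u v) = ‖v - ⟪u, v⟫ • u‖ := by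
    have h := sin_angle_mul_norm_mul_norm u v
    rw [hu, hv, mul_one, mul_one, real_inner_self_eq_norm_sq, real_inner_self_eq_norm_sq, hu,
      hv] at h
    rw [h, ← sqrt_sq (norm_nonneg _), norm_sub_sq_real, inner_smul_right, norm_smul,
      real_inner_comm, hu, hv, Real.norm_eq_abs, mul_one, sq_abs]
    ring_nf
  exact ⟨w, hw, huw, by rwa [hcos, hsin]⟩

end EuclideanGeometry

lemma MeasureTheory.Measure.map_pi_eval_prod_eval {ι : Type*} [Fintype ι] {Ω : ι → Type*}
    [∀ i, MeasurableSpace (Ω i)] (μ : (i : ι) → Measure (Ω i)) [∀ i, IsProbabilityMeasure (μ i)]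
    {i j : ι} (hij : i ≠ j) :
    (Measure.pi μ).map (fun ω => (ω i, ω j)) = (μ i).prod (μ j) := by
  have hindep :=
    (iIndepFun_pi (μ := μ) (X := fun i (x : Ω i) => x) fun i => aemeasurable_id).indepFun hij
  rw [(indepFun_iff_map_prod_eq_prod_map_map (measurable_pi_apply i).aemeasurable
    (measurable_pi_apply j).aemeasurable).1 hindep,
    (measurePreserving_eval μ i).map_eq, (measurePreserving_eval μ j).map_eq]

section StdGaussian

variable {E : Type*} [NormedAddCommGroup E] [InnerProductSpace ℝ E] [FiniteDimensional ℝ E]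
  [MeasurableSpace E] [BorelSpace E]

lemma map_inner_prod_inner_stdGaussian {u v : E} (hu : ‖u‖ = 1) (hv : ‖v‖ = 1)
    (huv : ⟪u, v⟫ = 0) :
    (stdGaussian E).map (fun w => (⟪u, w⟫, ⟪v, w⟫))
      = (gaussianReal 0 1).prod (gaussianReal 0 1) := by
  classical
  have hne : u ≠ v := by
    rintro rfl; simp [hu] at huv
  have hon : Orthonormal ℝ ((↑) : ({u, v} : Set E) → E) := by
    rw [orthonormal_subtype_iff_ite]
    have hvu : ⟪v, u⟫ = 0 := by rwa [real_inner_comm]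
    simp only [mem_insert_iff, mem_singleton_iff]
    rintro x (rfl | rfl) y (rfl | rfl) <;> simp [hu, hv, huv, hvu, hne, hne.symm]
  obtain ⟨s, b, hs, hb⟩ := hon.exists_orthonormalBasis_extension
  have hus : u ∈ s := hs (by simp)
  have hvs : v ∈ s := hs (by simp)
  have hcoord : ∀ (j : s) (x : s → ℝ), ⟪(j : E), ∑ i, x i • b i⟫ = x j := by
    intro j x
    rw [show (j : E) = b j by rw [hb]]
    simp [inner_sum, inner_smul_right, b.inner_eq_ite]
  rw [stdGaussian_eq_map_pi_orthonormalBasis b, Measure.map_map (by fun_prop) (by fun_prop)]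
  have hproj : (fun w => (⟪u, w⟫, ⟪v, w⟫)) ∘ (fun x : s → ℝ => ∑ i, x i • b i)
      = fun x => (x ⟨u, hus⟩, x ⟨v, hvs⟩) := by
    funext x; exact Prod.ext (hcoord ⟨u, hus⟩ x) (hcoord ⟨v, hvs⟩ x)
  rw [hproj, Measure.map_pi_eval_prod_eval _ (by simpa using hne)]

end StdGaussian

theorem stmt_12 (d : ℕ) (hd : 2 ≤ d) (x x' : Fin d → ℝ)
    (hx : ∑ i, x i ^ 2 = 1) (hx' : ∑ i, x' i ^ 2 = 1)
    (t θ : ℝ) (ht : t = ∑ i, x i * x' i) (hθ : θ = Real.arccos t) :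
    ∫ Θ : Fin d → ℝ, max (∑ i, x i * Θ i) 0 * max (∑ i, x' i * Θ i) 0
        ∂(Measure.pi fun _ : Fin d => gaussianReal 0 1)
      = (π - θ) / (2 * π) * Real.cos θ + Real.sin θ / (2 * π) := by
  have hsum_inner : ∀ (a : Fin d → ℝ) (w : EuclideanSpace ℝ (Fin d)),
      ∑ i, a i * w i = ⟪WithLp.toLp 2 a, w⟫ := fun a w => by simp [PiLp.inner_apply, mul_comm]
  have hnorm : ∀ a : Fin d → ℝ, ∑ i, a i ^ 2 = 1 → ‖WithLp.toLp 2 a‖ = 1 := fun a ha => by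
    simp [EuclideanSpace.norm_eq, ha]
  set X : EuclideanSpace ℝ (Fin d) := WithLp.toLp 2 x
  set X' : EuclideanSpace ℝ (Fin d) := WithLp.toLp 2 x'
  have hangle : θ = angle X X' := by
    rw [hθ, ht, hsum_inner, angle, hnorm x hx, hnorm x' hx', mul_one, div_one]
  obtain ⟨Y, hY, hXY, hX'⟩ :=
    exists_eq_cos_angle_smul_add_sin_angle_smul (by simpa using hd) (hnorm x hx) (hnorm x' hx')
  rw [← hangle] at hX'
  calc _ = ∫ w, (fun p : ℝ × ℝ => max p.1 0 * max (cos θ * p.1 + sin θ * p.2) 0)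
          (⟪X, w⟫, ⟪Y, w⟫) ∂stdGaussian (EuclideanSpace ℝ (Fin d)) := by
        rw [← map_pi_eq_stdGaussian, ← MeasurableEquiv.coe_toLp, integral_map_equiv]
        simp [hsum_inner, hX', inner_add_left, inner_smul_left, X]
    _ = ∫ p : ℝ × ℝ, max p.1 0 * max (cos θ * p.1 + sin θ * p.2) 0
          ∂(stdGaussian (EuclideanSpace ℝ (Fin d))).map (fun w => (⟪X, w⟫, ⟪Y, w⟫)) := by
        rw [integral_map (by fun_prop) (Continuous.aestronglyMeasurable (by fun_prop))]
    _ = _ := by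
        rw [map_inner_prod_inner_stdGaussian (hnorm x hx) hY hXY,
          integral_max_mul_max_gaussianReal_prod (hangle ▸ angle_nonneg X X')
            (hangle ▸ angle_le_pi X X')]
end
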